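/- Let g : {0,1}^n → {0,1} be Boolean and g̃ : {0,1}^n → [0,1] a degree-d polynomial approximating g (pointwise error ≤ 1/3). Then d·p_{g̃} ≥ (n/36)·s̄_g ≥ (1/36)·H(p_g), where H is the binary entropy, p_g the fraction of 1-inputs of g, and p_{g̃} = E_x[g̃(x)]. -/

import Mathlib

/-- Flip the i-th bit of a Boolean string. -/
def flipBit {n : ℕ} (x : Fin n → Bool) (i : Fin n) : Fin n → Bool :=
  Function.update x i (!(x i))

/-- Fourier coefficient `ĝ_r = E_x[g(x)·(−1)^{x·r}]`. -/
noncomputable def cubeFourier {n : ℕ} (g : (Fin n → Bool) → ℝ) (r : Fin n → Bool) : ℝ :=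
  (∑ x : Fin n → Bool, g x * (-1 : ℝ) ^ (Finset.univ.filter (fun i => x i ∧ r i)).card) / 2 ^ n

/-- Hamming weight of `r`. -/
def hammingWt {n : ℕ} (r : Fin n → Bool) : ℕ :=
  (Finset.univ.filter (fun i => r i = true)).card

/-- Average sensitivity of a Boolean function as a probability. -/
noncomputable def avgSensBool {n : ℕ} (g : (Fin n → Bool) → Bool) : ℝ :=
  (((Finset.univ : Finset ((Fin n → Bool) × Fin n)).filter
      (fun p => g p.1 ≠ g (flipBit p.1 p.2))).card : ℝ) / (2 ^ n * n)

/-- Binary entropy function. -/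
noncomputable def binEnt (p : ℝ) : ℝ :=
  p * Real.logb 2 (1 / p) + (1 - p) * Real.logb 2 (1 / (1 - p))

/-! ### Fourier analysis on the cube -/

noncomputable def eps {n : ℕ} (x r : Fin n → Bool) : ℝ :=
  ∏ j : Fin n, (if x j ∧ r j then (-1 : ℝ) else 1)

section FourierLemmas
variable {n : ℕ}

lemma eps_eq_pow (x r : Fin n → Bool) :
    eps x r = (-1 : ℝ) ^ (Finset.univ.filter (fun i => x i ∧ r i)).card := by
  rw [eps, Finset.prod_ite, Finset.prod_const, Finset.prod_const, one_pow, mul_one]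

lemma eps_comm (x r : Fin n → Bool) : eps x r = eps r x := by
  unfold eps
  exact Finset.prod_congr rfl fun j _ => if_congr (and_comm) rfl rfl

lemma eps_mul (x r s : Fin n → Bool) :
    eps x r * eps x s = eps x (fun j => xor (r j) (s j)) := by
  unfold eps
  rw [← Finset.prod_mul_distrib]
  refine Finset.prod_congr rfl fun j _ => ?_
  cases hx : x j <;> cases hr : r j <;> cases hs : s j <;> simp [hx, hr, hs]

lemma sum_eps (t : Fin n → Bool) :
    ∑ x : Fin n → Bool, eps x t = if t = (fun _ => false) then (2:ℝ)^n else 0 := by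
  have h := Finset.prod_univ_sum (fun _ : Fin n => (Finset.univ : Finset Bool))
      (fun j b => if b ∧ t j then (-1:ℝ) else 1)
  rw [Fintype.piFinset_univ] at h
  have h2 : ∑ x : Fin n → Bool, eps x t
      = ∏ j : Fin n, ∑ b : Bool, (if b ∧ t j then (-1:ℝ) else 1) := by
    rw [h]; rfl
  rw [h2]
  by_cases ht : t = fun _ => false
  · subst ht; simp
  · rw [if_neg ht]
    obtain ⟨j, hj⟩ : ∃ j, t j = true := by
      by_contra hc; push_neg at hc
      exact ht (funext fun j => by simpa using hc j)
    refine Finset.prod_eq_zero (Finset.mem_univ j) ?_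
    simp [hj]

lemma orth (r s : Fin n → Bool) :
    ∑ x : Fin n → Bool, eps x r * eps x s = if r = s then (2:ℝ)^n else 0 := by
  simp only [eps_mul, sum_eps]
  congr 1
  simp only [eq_iff_iff]
  constructor
  · intro h
    funext j
    have := congrFun h j
    revert this
    cases r j <;> cases s j <;> simp
  · rintro rfl
    funext j; simp

lemma cubeFourier_eq (f : (Fin n → Bool) → ℝ) (r : Fin n → Bool) :
    cubeFourier f r = (∑ x : Fin n → Bool, f x * eps x r) / 2 ^ n := by
  unfold cubeFourier
  congr 1
  exact Finset.sum_congr rfl fun x _ => by rw [eps_eq_pow]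

lemma sum_sq_of_coeffs (c : (Fin n → Bool) → ℝ) :
    ∑ x : Fin n → Bool, (∑ r : Fin n → Bool, c r * eps x r)^2
      = 2^n * ∑ r : Fin n → Bool, (c r)^2 := by
  have key : ∀ x : Fin n → Bool, (∑ r : Fin n → Bool, c r * eps x r)^2
      = ∑ r : Fin n → Bool, ∑ s : Fin n → Bool, (c r * c s) * (eps x r * eps x s) := by
    intro x
    rw [sq, Finset.sum_mul_sum]
    exact Finset.sum_congr rfl fun r _ => Finset.sum_congr rfl fun s _ => by ring
  simp only [key]
  rw [Finset.sum_comm]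
  have h3 : ∀ r : Fin n → Bool,
      (∑ x : Fin n → Bool, ∑ s : Fin n → Bool, (c r * c s) * (eps x r * eps x s))
        = 2^n * (c r)^2 := by
    intro r
    rw [Finset.sum_comm]
    have h1 : ∀ s : Fin n → Bool,
        (∑ x : Fin n → Bool, (c r * c s) * (eps x r * eps x s))
          = if r = s then (c r * c s) * 2^n else 0 := by
      intro s
      rw [← Finset.mul_sum, orth]
      split <;> simp
    simp only [h1]
    rw [Finset.sum_ite_eq Finset.univ r (fun s => (c r * c s) * 2^n)]
    simp [sq]; ring
  simp only [h3]
  rw [← Finset.mul_sum]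

lemma inversion (f : (Fin n → Bool) → ℝ) (x : Fin n → Bool) :
    f x = ∑ r : Fin n → Bool, cubeFourier f r * eps x r := by
  simp only [cubeFourier_eq]
  have h1 : ∀ r : Fin n → Bool, (∑ y : Fin n → Bool, f y * eps y r) / 2^n * eps x r
      = (∑ y : Fin n → Bool, f y * (eps y r * eps x r)) / 2^n := by
    intro r
    rw [div_mul_eq_mul_div, Finset.sum_mul, Finset.sum_div, Finset.sum_div]
    exact Finset.sum_congr rfl fun y _ => by ring
  simp only [h1]
  rw [← Finset.sum_div, Finset.sum_comm]
  have h2 : ∀ y : Fin n → Bool,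
      (∑ r : Fin n → Bool, f y * (eps y r * eps x r)) = if y = x then f y * 2^n else 0 := by
    intro y
    rw [← Finset.mul_sum]
    have h4 : ∑ r : Fin n → Bool, eps y r * eps x r = if y = x then (2:ℝ)^n else 0 := by
      have h5 : ∀ r : Fin n → Bool, eps y r * eps x r = eps r y * eps r x := by
        intro r; rw [eps_comm y r, eps_comm x r]
      simp only [h5]
      exact orth y x
    rw [h4]
    split <;> simp
  simp only [h2]
  rw [Finset.sum_ite_eq' Finset.univ x (fun y => f y * 2^n)]
  simp only [Finset.mem_univ, if_true]
  field_simp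

lemma eps_flip (x r : Fin n → Bool) (i : Fin n) :
    eps (flipBit x i) r = (if r i then (-1:ℝ) else 1) * eps x r := by
  unfold eps
  rw [← Finset.mul_prod_erase Finset.univ _ (Finset.mem_univ i),
      ← Finset.mul_prod_erase Finset.univ
        (fun j => if x j ∧ r j then (-1:ℝ) else 1) (Finset.mem_univ i), ← mul_assoc]
  have hrest : ∀ j ∈ Finset.univ.erase i,
      (if flipBit x i j ∧ r j then (-1:ℝ) else 1) = (if x j ∧ r j then (-1:ℝ) else 1) := by
    intro j hj
    have hj' : flipBit x i j = x j :=
      Function.update_of_ne (Finset.ne_of_mem_erase hj) _ _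
    rw [hj']
  rw [Finset.prod_congr rfl hrest]
  congr 1
  have hfi : flipBit x i i = !(x i) := by simp [flipBit]
  rw [hfi]
  cases hx : x i <;> cases hr : r i <;> simp

lemma diff_sq_sum (f : (Fin n → Bool) → ℝ) (i : Fin n) :
    ∑ x : Fin n → Bool, (f x - f (flipBit x i))^2
      = 2^n * ∑ r : Fin n → Bool, (if r i then 2 * cubeFourier f r else 0)^2 := by
  have hx : ∀ x : Fin n → Bool, f x - f (flipBit x i)
      = ∑ r : Fin n → Bool, (if r i then 2 * cubeFourier f r else 0) * eps x r := by
    intro x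
    rw [inversion f x, inversion f (flipBit x i), ← Finset.sum_sub_distrib]
    refine Finset.sum_congr rfl fun r _ => ?_
    rw [eps_flip]
    by_cases hr : r i = true <;> simp [hr] <;> ring
  simp only [hx]
  exact sum_sq_of_coeffs _

end FourierLemmas

/-! ### Isoperimetry -/

noncomputable def inn {n : ℕ} (S : Finset (Fin n → Bool)) : ℕ :=
  ((Finset.univ : Finset ((Fin n → Bool) × Fin n)).filter
    (fun p => p.1 ∈ S ∧ flipBit p.1 p.2 ∈ S)).card

lemma logb_one_add_ge {t : ℝ} (h0 : 0 ≤ t) (h1 : t ≤ 1) : t ≤ Real.logb 2 (1 + t) := by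
  rw [Real.logb, le_div_iff₀ (Real.log_pos one_lt_two)]
  have h := convexOn_exp.2 (Set.mem_univ (0:ℝ)) (Set.mem_univ (Real.log 2))
      (by linarith : (0:ℝ) ≤ 1 - t) h0 (by ring)
  simp only [smul_eq_mul, mul_zero, zero_add, Real.exp_zero, mul_one,
    Real.exp_log two_pos] at h
  have h2 : Real.exp (t * Real.log 2) ≤ 1 + t := by linarith
  calc t * Real.log 2 = Real.log (Real.exp (t * Real.log 2)) := (Real.log_exp _).symm
    _ ≤ Real.log (1 + t) := Real.log_le_log (Real.exp_pos _) h2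

lemma numeric_lemma {a b : ℕ} (hab : a ≤ b) :
    (a:ℝ) * Real.logb 2 a + (b:ℝ) * Real.logb 2 b + 2 * a
      ≤ ((a:ℝ) + b) * Real.logb 2 ((a:ℝ) + b) := by
  rcases Nat.eq_zero_or_pos a with ha | ha
  · subst ha; simp
  have hb : 0 < b := lt_of_lt_of_le ha hab
  have haR : (0:ℝ) < a := by exact_mod_cast ha
  have hbR : (0:ℝ) < b := by exact_mod_cast hb
  have habR : (a:ℝ) ≤ b := by exact_mod_cast hab
  have key1 : (a:ℝ) ≤ (a:ℝ) * Real.logb 2 (((a:ℝ) + b) / a) := by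
    have h2 : (2:ℝ) ≤ ((a:ℝ) + b) / a := by
      rw [le_div_iff₀ haR]; linarith
    have : (1:ℝ) ≤ Real.logb 2 (((a:ℝ) + b) / a) := by
      rw [Real.le_logb_iff_rpow_le one_lt_two (by positivity)]
      simpa using h2
    nlinarith
  have key2 : (a:ℝ) ≤ (b:ℝ) * Real.logb 2 (((a:ℝ) + b) / b) := by
    have heq : ((a:ℝ) + b) / b = 1 + (a:ℝ)/b := by field_simp; ring
    rw [heq]
    have hl := logb_one_add_ge (t := (a:ℝ)/b) (by positivity)
      (by rw [div_le_one hbR]; exact habR)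
    calc (a:ℝ) = b * ((a:ℝ)/b) := by field_simp
      _ ≤ b * Real.logb 2 (1 + (a:ℝ)/b) :=
          mul_le_mul_of_nonneg_left hl (le_of_lt hbR)
  have hda : Real.logb 2 (((a:ℝ) + b) / a) = Real.logb 2 ((a:ℝ)+b) - Real.logb 2 a :=
    Real.logb_div (by positivity) (ne_of_gt haR)
  have hdb : Real.logb 2 (((a:ℝ) + b) / b) = Real.logb 2 ((a:ℝ)+b) - Real.logb 2 b :=
    Real.logb_div (by positivity) (ne_of_gt hbR)
  rw [hda] at key1
  rw [hdb] at key2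
  nlinarith

section Split
variable {n : ℕ}

lemma sum_cons {M : Type*} [AddCommMonoid M] (F : (Fin (n+1) → Bool) → M) :
    ∑ x : Fin (n+1) → Bool, F x
      = (∑ y : Fin n → Bool, F (Fin.cons false y))
        + ∑ y : Fin n → Bool, F (Fin.cons true y) := by
  rw [← Fintype.sum_equiv (Fin.consEquiv (fun _ => Bool))
      (fun p => F (Fin.cons p.1 p.2)) F (fun p => rfl)]
  rw [Fintype.sum_prod_type, Fintype.sum_bool, add_comm]

lemma flip_cons_succ (b : Bool) (y : Fin n → Bool) (j : Fin n) :
    flipBit (Fin.cons b y) j.succ = Fin.cons b (flipBit y j) := by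
  unfold flipBit
  rw [Fin.cons_succ, Fin.cons_update]

lemma flip_cons_zero (b : Bool) (y : Fin n → Bool) :
    flipBit (Fin.cons b y) 0 = Fin.cons (!b) y := by
  unfold flipBit
  rw [Fin.cons_zero, Fin.update_cons_zero]

lemma inn_split (S : Finset (Fin (n+1) → Bool)) :
    inn S = inn (Finset.univ.filter (fun y : Fin n → Bool => Fin.cons false y ∈ S))
      + inn (Finset.univ.filter (fun y : Fin n → Bool => Fin.cons true y ∈ S))
      + 2 * ((Finset.univ.filter (fun y : Fin n → Bool => Fin.cons false y ∈ S)) ∩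
             (Finset.univ.filter (fun y : Fin n → Bool => Fin.cons true y ∈ S))).card := by
  set S0 := Finset.univ.filter (fun y : Fin n → Bool => Fin.cons false y ∈ S) with hS0
  set S1 := Finset.univ.filter (fun y : Fin n → Bool => Fin.cons true y ∈ S) with hS1
  have hmem0 : ∀ y : Fin n → Bool, y ∈ S0 ↔ Fin.cons false y ∈ S := by
    intro y; rw [hS0, Finset.mem_filter]; simp
  have hmem1 : ∀ y : Fin n → Bool, y ∈ S1 ↔ Fin.cons true y ∈ S := by
    intro y; rw [hS1, Finset.mem_filter]; simp
  have hinter : (S0 ∩ S1).card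
      = ∑ y : Fin n → Bool, if Fin.cons false y ∈ S ∧ Fin.cons true y ∈ S then 1 else 0 := by
    rw [show S0 ∩ S1 = Finset.univ.filter
        (fun y => Fin.cons false y ∈ S ∧ Fin.cons true y ∈ S) by
      ext y; simp [Finset.mem_inter, hmem0 y, hmem1 y]]
    exact Finset.card_filter _ _
  have hinnb : ∀ (b : Bool) (T : Finset (Fin n → Bool)),
      (∀ y, y ∈ T ↔ Fin.cons b y ∈ S) →
      inn T = ∑ y : Fin n → Bool, ∑ j : Fin n,
        if Fin.cons b y ∈ S ∧ Fin.cons b (flipBit y j) ∈ S then 1 else 0 := by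
    intro b T hT
    rw [inn, Finset.card_filter, Fintype.sum_prod_type]
    exact Finset.sum_congr rfl fun y _ => Finset.sum_congr rfl fun j _ => by
      simp only [hT]
  rw [inn, Finset.card_filter, Fintype.sum_prod_type]
  have hrow : ∀ x : Fin (n+1) → Bool,
      (∑ i : Fin (n+1), if x ∈ S ∧ flipBit x i ∈ S then 1 else 0)
      = (if x ∈ S ∧ flipBit x 0 ∈ S then 1 else 0)
        + ∑ j : Fin n, if x ∈ S ∧ flipBit x j.succ ∈ S then 1 else 0 :=
    fun x => Fin.sum_univ_succ _
  simp only [hrow]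
  rw [Finset.sum_add_distrib]
  rw [sum_cons (fun x => if x ∈ S ∧ flipBit x 0 ∈ S then 1 else 0)]
  rw [sum_cons (fun x => ∑ j : Fin n, if x ∈ S ∧ flipBit x j.succ ∈ S then 1 else 0)]
  simp only [flip_cons_zero, flip_cons_succ, Bool.not_false, Bool.not_true]
  rw [hinnb false S0 hmem0, hinnb true S1 hmem1, hinter]
  have hcomm : (∑ y : Fin n → Bool, if Fin.cons true y ∈ S ∧ Fin.cons false y ∈ S then 1 else 0)
      = ∑ y : Fin n → Bool, if Fin.cons false y ∈ S ∧ Fin.cons true y ∈ S then 1 else 0 :=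
    Finset.sum_congr rfl fun y _ => if_congr and_comm rfl rfl
  rw [hcomm]
  ring

lemma card_split (S : Finset (Fin (n+1) → Bool)) :
    S.card = (Finset.univ.filter (fun y : Fin n → Bool => Fin.cons false y ∈ S)).card
      + (Finset.univ.filter (fun y : Fin n → Bool => Fin.cons true y ∈ S)).card := by
  have hS : S.card = ∑ x : Fin (n+1) → Bool, if x ∈ S then 1 else 0 := by
    conv_lhs => rw [← Finset.filter_univ_mem S]
    exact Finset.card_filter _ _
  rw [Finset.card_filter, Finset.card_filter, hS,
    sum_cons (fun x => if x ∈ S then 1 else 0)]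

end Split

lemma inn_le : ∀ (n : ℕ) (S : Finset (Fin n → Bool)),
    (inn S : ℝ) ≤ S.card * Real.logb 2 S.card
  | 0, S => by
    have h0 : inn S = 0 := by
      rw [inn]
      have h : (Finset.univ : Finset ((Fin 0 → Bool) × Fin 0)) = ∅ := by
        apply Finset.univ_eq_empty
      rw [h, Finset.filter_empty, Finset.card_empty]
    have h1 : S.card ≤ 1 := by
      have := Finset.card_le_univ S
      simpa using this
    rw [h0]
    rcases Nat.le_one_iff_eq_zero_or_eq_one.mp h1 with h | h <;> rw [h] <;> norm_num
  | (n+1), S => by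
    set S0 := Finset.univ.filter (fun y : Fin n → Bool => Fin.cons false y ∈ S) with hS0
    set S1 := Finset.univ.filter (fun y : Fin n → Bool => Fin.cons true y ∈ S) with hS1
    have h1 := inn_le n S0
    have h2 := inn_le n S1
    have hsplit := inn_split S
    have hcard := card_split S
    rw [← hS0, ← hS1] at hsplit hcard
    have hM0 : (S0 ∩ S1).card ≤ S0.card := Finset.card_le_card Finset.inter_subset_left
    have hM1 : (S0 ∩ S1).card ≤ S1.card := Finset.card_le_card Finset.inter_subset_right
    rw [hcard]
    rcases le_total S0.card S1.card with hle | hle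
    · have hnum := numeric_lemma hle
      have hchain : (inn S : ℝ) ≤ S0.card * Real.logb 2 S0.card
          + S1.card * Real.logb 2 S1.card + 2 * S0.card := by
        have heq : (inn S : ℝ) = (inn S0 : ℝ) + inn S1 + 2 * (S0 ∩ S1).card := by
          rw [hsplit]; push_cast; ring
        rw [heq]
        have hMr : ((S0 ∩ S1).card : ℝ) ≤ S0.card := by exact_mod_cast hM0
        linarith
      push_cast
      linarith
    · have hnum := numeric_lemma hle
      have hchain : (inn S : ℝ) ≤ S0.card * Real.logb 2 S0.card
          + S1.card * Real.logb 2 S1.card + 2 * S1.card := by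
        have heq : (inn S : ℝ) = (inn S0 : ℝ) + inn S1 + 2 * (S0 ∩ S1).card := by
          rw [hsplit]; push_cast; ring
        rw [heq]
        have hMr : ((S0 ∩ S1).card : ℝ) ≤ S1.card := by exact_mod_cast hM1
        linarith
      push_cast
      rw [add_comm ((S1.card:ℝ)) ((S0.card:ℝ))] at hnum
      linarith
/-- Combined bound: `d·p_{g̃} ≥ (n/36)·s̄_g ≥ (1/36)·H(p_g)`. -/
theorem degree_entropy_bound {n d : ℕ} (hn : 0 < n) (g : (Fin n → Bool) → Bool)
    (gt : (Fin n → Bool) → ℝ) (hg0 : ∀ x, 0 ≤ gt x) (hg1 : ∀ x, gt x ≤ 1)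
    (happrox : ∀ x, |gt x - (if g x then (1:ℝ) else 0)| ≤ 1/3)
    (hdeg : ∀ r : Fin n → Bool, d < hammingWt r → cubeFourier gt r = 0) :
    (d : ℝ) * ((∑ x : Fin n → Bool, gt x) / 2 ^ n) ≥ (n / 36) * avgSensBool g
    ∧ (n / 36) * avgSensBool g
        ≥ (1 / 36) * binEnt (((Finset.univ.filter (fun x => g x = true)).card : ℝ) / 2 ^ n) := by
  have h2n : (0:ℝ) < 2^n := by positivity
  have hnR : (0:ℝ) < n := by exact_mod_cast hn
  set B : ℕ := ((Finset.univ : Finset ((Fin n → Bool) × Fin n)).filter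
      (fun p => g p.1 ≠ g (flipBit p.1 p.2))).card with hB
  have havg : avgSensBool g = (B:ℝ) / (2^n * n) := by
    unfold avgSensBool
    rw [← hB]
  have hq : (n:ℝ)/36 * ((B:ℝ)/(2^n * n)) = (B:ℝ)/(36 * 2^n) := by
    field_simp
  constructor
  · -- Part 1 : degree bound
    have parseval : ∑ x : Fin n → Bool, (gt x)^2
        = 2^n * ∑ r : Fin n → Bool, (cubeFourier gt r)^2 := by
      have hx : ∀ x : Fin n → Bool,
          (gt x)^2 = (∑ r : Fin n → Bool, cubeFourier gt r * eps x r)^2 := fun x => by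
        rw [← inversion]
      simp only [hx]
      exact sum_sq_of_coeffs _
    have total : ∑ i : Fin n, ∑ x : Fin n → Bool, (gt x - gt (flipBit x i))^2
        = 2^n * ∑ r : Fin n → Bool, 4 * (hammingWt r : ℝ) * (cubeFourier gt r)^2 := by
      simp only [diff_sq_sum gt]
      rw [← Finset.mul_sum, Finset.sum_comm]
      congr 1
      refine Finset.sum_congr rfl fun r _ => ?_
      have hsq : ∀ i : Fin n, (if r i then 2 * cubeFourier gt r else 0)^2
          = if r i = true then (4 * (cubeFourier gt r)^2) else 0 := by
        intro i; split
        · ring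
        · simp
      rw [Finset.sum_congr rfl fun i _ => hsq i, Finset.sum_ite, Finset.sum_const,
        Finset.sum_const_zero, add_zero, hammingWt, nsmul_eq_mul]
      ring
    have hswap : ∑ i : Fin n, ∑ x : Fin n → Bool, (gt x - gt (flipBit x i))^2
        = ∑ p : (Fin n → Bool) × Fin n, (gt p.1 - gt (flipBit p.1 p.2))^2 := by
      rw [Fintype.sum_prod_type, Finset.sum_comm]
    have hpt : ∀ p : (Fin n → Bool) × Fin n,
        p ∈ (Finset.univ : Finset ((Fin n → Bool) × Fin n)).filter
          (fun p => g p.1 ≠ g (flipBit p.1 p.2)) →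
        (1:ℝ)/9 ≤ (gt p.1 - gt (flipBit p.1 p.2))^2 := by
      intro p hp
      rw [Finset.mem_filter] at hp
      have hne := hp.2
      have h1 := happrox p.1
      have h2 := happrox (flipBit p.1 p.2)
      by_cases hgx : g p.1 = true
      · have hgy : g (flipBit p.1 p.2) = false := by
          cases h : g (flipBit p.1 p.2)
          · rfl
          · exact absurd (by rw [hgx, h]) hne
        simp only [hgx, hgy] at h1 h2
        norm_num at h1 h2
        rw [abs_le] at h1 h2
        nlinarith [h1.1, h1.2, h2.1, h2.2]
      · have hgx' : g p.1 = false := by simpa using hgx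
        have hgy : g (flipBit p.1 p.2) = true := by
          cases h : g (flipBit p.1 p.2)
          · exact absurd (by rw [hgx', h]) hne
          · rfl
        simp only [hgx', hgy] at h1 h2
        norm_num at h1 h2
        rw [abs_le] at h1 h2
        nlinarith [h1.1, h1.2, h2.1, h2.2]
    have lower : (B:ℝ) * (1/9)
        ≤ ∑ i : Fin n, ∑ x : Fin n → Bool, (gt x - gt (flipBit x i))^2 := by
      rw [hswap]
      calc (B:ℝ) * (1/9)
          = ∑ _p ∈ (Finset.univ : Finset ((Fin n → Bool) × Fin n)).filter
              (fun p => g p.1 ≠ g (flipBit p.1 p.2)), (1:ℝ)/9 := by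
            rw [Finset.sum_const, nsmul_eq_mul, hB]
        _ ≤ ∑ p ∈ (Finset.univ : Finset ((Fin n → Bool) × Fin n)).filter
              (fun p => g p.1 ≠ g (flipBit p.1 p.2)),
              (gt p.1 - gt (flipBit p.1 p.2))^2 := Finset.sum_le_sum hpt
        _ ≤ ∑ p : (Fin n → Bool) × Fin n, (gt p.1 - gt (flipBit p.1 p.2))^2 :=
            Finset.sum_le_sum_of_subset_of_nonneg (Finset.filter_subset _ _)
              (fun p _ _ => sq_nonneg _)
    have hAle : ∑ r : Fin n → Bool, 4 * (hammingWt r : ℝ) * (cubeFourier gt r)^2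
        ≤ 4 * (d:ℝ) * ∑ r : Fin n → Bool, (cubeFourier gt r)^2 := by
      rw [Finset.mul_sum]
      refine Finset.sum_le_sum fun r _ => ?_
      by_cases hr : d < hammingWt r
      · rw [hdeg r hr]
        simp
      · push_neg at hr
        have : (hammingWt r : ℝ) ≤ d := by exact_mod_cast hr
        nlinarith [sq_nonneg (cubeFourier gt r)]
    have hsqle : ∑ x : Fin n → Bool, (gt x)^2 ≤ ∑ x : Fin n → Bool, gt x :=
      Finset.sum_le_sum fun x _ => by nlinarith [hg0 x, hg1 x]
    have key : (B:ℝ) ≤ 36 * d * ∑ x : Fin n → Bool, gt x := by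
      have e1 : (B:ℝ) * (1/9)
          ≤ 2^n * ∑ r : Fin n → Bool, 4 * (hammingWt r : ℝ) * (cubeFourier gt r)^2 := by
        rw [← total]; exact lower
      have e2 : (2:ℝ)^n * ∑ r : Fin n → Bool, 4 * (hammingWt r : ℝ) * (cubeFourier gt r)^2
          ≤ 2^n * (4 * (d:ℝ) * ∑ r : Fin n → Bool, (cubeFourier gt r)^2) :=
        mul_le_mul_of_nonneg_left hAle (le_of_lt h2n)
      have e3 : (2:ℝ)^n * (4 * (d:ℝ) * ∑ r : Fin n → Bool, (cubeFourier gt r)^2)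
          = 4 * (d:ℝ) * ∑ x : Fin n → Bool, (gt x)^2 := by
        rw [parseval]; ring
      have e4 : 4 * (d:ℝ) * ∑ x : Fin n → Bool, (gt x)^2
          ≤ 4 * (d:ℝ) * ∑ x : Fin n → Bool, gt x :=
        mul_le_mul_of_nonneg_left hsqle (by positivity)
      linarith
    rw [ge_iff_le, havg, hq, div_le_iff₀ (by positivity : (0:ℝ) < 36 * 2^n)]
    calc (B:ℝ) ≤ 36 * d * ∑ x : Fin n → Bool, gt x := key
      _ = (d:ℝ) * ((∑ x : Fin n → Bool, gt x) / 2^n) * (36 * 2^n) := by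
          field_simp
  · -- Part 2 : isoperimetry
    set S : Finset (Fin n → Bool) := Finset.univ.filter (fun x => g x = true) with hS
    set Sc : Finset (Fin n → Bool) := Finset.univ.filter (fun x => g x = false) with hSc
    have hmS : ∀ x, x ∈ S ↔ g x = true := fun x => by rw [hS, Finset.mem_filter]; simp
    have hmSc : ∀ x, x ∈ Sc ↔ g x = false := fun x => by rw [hSc, Finset.mem_filter]; simp
    have hcard_univ : (Finset.univ : Finset (Fin n → Bool)).card = 2^n := by
      rw [Finset.card_univ, Fintype.card_fun]
      simp
    have hac : S.card + Sc.card = 2^n := by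
      have h := Finset.card_filter_add_card_filter_not
        (s := (Finset.univ : Finset (Fin n → Bool))) (p := fun x => g x = true)
      have hceq : Finset.univ.filter (fun x : Fin n → Bool => ¬ (g x = true)) = Sc := by
        rw [hSc]
        apply Finset.filter_congr
        intro x _
        simp [Bool.not_eq_true]
      rw [hceq, hcard_univ] at h
      exact h
    have hpart : B + inn S + inn Sc = 2^n * n := by
      have hpt : ∀ p : (Fin n → Bool) × Fin n,
          ((if g p.1 ≠ g (flipBit p.1 p.2) then 1 else 0)
          + (if p.1 ∈ S ∧ flipBit p.1 p.2 ∈ S then 1 else 0))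
          + (if p.1 ∈ Sc ∧ flipBit p.1 p.2 ∈ Sc then (1:ℕ) else 0) = 1 := by
        intro p
        simp only [hmS, hmSc]
        cases h1 : g p.1 <;> cases h2 : g (flipBit p.1 p.2) <;> simp
      have hBsum : B = ∑ p : (Fin n → Bool) × Fin n,
          if g p.1 ≠ g (flipBit p.1 p.2) then 1 else 0 := by
        rw [hB]; exact Finset.card_filter _ _
      have hSsum : inn S = ∑ p : (Fin n → Bool) × Fin n,
          if p.1 ∈ S ∧ flipBit p.1 p.2 ∈ S then 1 else 0 := Finset.card_filter _ _
      have hScsum : inn Sc = ∑ p : (Fin n → Bool) × Fin n,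
          if p.1 ∈ Sc ∧ flipBit p.1 p.2 ∈ Sc then 1 else 0 := Finset.card_filter _ _
      rw [hBsum, hSsum, hScsum, ← Finset.sum_add_distrib, ← Finset.sum_add_distrib]
      rw [Finset.sum_congr rfl fun p _ => hpt p, Finset.sum_const, Finset.card_univ,
        Fintype.card_prod, Fintype.card_fun, smul_eq_mul, mul_one]
      simp
    have hlog2n : Real.logb 2 ((2:ℝ)^n) = n := by
      rw [Real.logb_pow, Real.logb_self_eq_one one_lt_two, mul_one]
    have hent : (2:ℝ)^n * binEnt ((S.card:ℝ)/2^n)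
        = n * 2^n - S.card * Real.logb 2 S.card - Sc.card * Real.logb 2 Sc.card := by
      rcases Nat.eq_zero_or_pos S.card with ha0 | hapos
      · have hcc : Sc.card = 2^n := by
          have h := hac
          rw [ha0, zero_add] at h
          exact h
        rw [ha0, hcc]
        push_cast
        norm_num [binEnt, hlog2n]
        ring
      · rcases Nat.eq_zero_or_pos Sc.card with hc0 | hcpos
        · have haa : S.card = 2^n := by
            have h := hac
            rw [hc0, add_zero] at h
            exact h
          rw [hc0, haa]
          push_cast
          rw [div_self (ne_of_gt h2n)]
          norm_num [binEnt, hlog2n]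
          ring
        · have haR : (0:ℝ) < S.card := by exact_mod_cast hapos
          have hcR : (0:ℝ) < Sc.card := by exact_mod_cast hcpos
          have hacR : (S.card:ℝ) + Sc.card = 2^n := by
            exact_mod_cast hac
          have h1p : 1 - (S.card:ℝ)/2^n = (Sc.card:ℝ)/2^n := by
            field_simp
            linarith
          rw [binEnt, h1p, one_div_div, one_div_div]
          rw [Real.logb_div (ne_of_gt h2n) (ne_of_gt haR),
            Real.logb_div (ne_of_gt h2n) (ne_of_gt hcR), hlog2n]
          field_simp
          rw [← hacR]
          ring
    have hinnS := inn_le n S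
    have hinnSc := inn_le n Sc
    have hpartR : (B:ℝ) = n * 2^n - inn S - inn Sc := by
      have hcast : (B:ℝ) + inn S + inn Sc = 2^n * n := by exact_mod_cast hpart
      linarith
    have hBent : (2:ℝ)^n * binEnt ((S.card:ℝ)/2^n) ≤ (B:ℝ) := by
      rw [hent, hpartR]
      linarith
    rw [ge_iff_le, havg, hq]
    have hrw : (1:ℝ)/36 * binEnt ((S.card:ℝ)/2^n)
        = (2^n * binEnt ((S.card:ℝ)/2^n)) / (36 * 2^n) := by
      field_simp
    rw [hrw]
    gcongr
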